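/- arXiv:1804.00794 — 6 statements merged into one kernel-verified Lean document; each statement's English description precedes it below -/
import Mathlib

section
/- Alternation. Let (W,b) be a competitive nondegenerate TLN on n neurons. If σ ⊆ [n] and k ∉ σ are such that both σ ∈ FP(W,b) and σ ∪ {k} ∈ FP(W,b), then sgn det(I − W_{σ∪{k}}) = −sgn det(I − W_σ). -/
open Matrix Finset

/-- `x` is a fixed point of the TLN `(W, b)` restricted to the subset `τ` of neurons
(coordinates outside `τ` are held at zero): for `i ∈ τ`,
`x i = [∑_{j ∈ τ} W i j * x j + b i]_+`. -/
def IsRestFixedPoint {n : ℕ} (W : Matrix (Fin n) (Fin n) ℝ) (b : Fin n → ℝ)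
    (τ : Finset (Fin n)) (x : Fin n → ℝ) : Prop :=
  (∀ i ∈ τ, x i = max 0 (∑ j ∈ τ, W i j * x j + b i)) ∧ ∀ i ∉ τ, x i = 0

/-- `σ ∈ FP(W_τ, b_τ)` : `σ` is the support of a fixed point of the restriction
of the TLN `(W, b)` to `τ`. -/
def memFP {n : ℕ} (W : Matrix (Fin n) (Fin n) ℝ) (b : Fin n → ℝ)
    (τ σ : Finset (Fin n)) : Prop :=
  ∃ x : Fin n → ℝ, IsRestFixedPoint W b τ x ∧ ∀ i, 0 < x i ↔ i ∈ σ

/-- `det (I - W_σ)`, the determinant of the principal submatrix on `σ`. -/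
noncomputable def detIW {n : ℕ} (W : Matrix (Fin n) (Fin n) ℝ) (σ : Finset (Fin n)) : ℝ :=
  ((1 : Matrix {x // x ∈ σ} {x // x ∈ σ} ℝ) - W.submatrix Subtype.val Subtype.val).det

/-- The Cramer determinant `s_i^σ := det ((I − W_{σ∪{i}})_i ; b_{σ∪{i}})`:
the matrix `I − W` restricted to `σ ∪ {i}`, with the column indexed by `i`
replaced by `b` restricted to `σ ∪ {i}`. -/
noncomputable def cramerDet {n : ℕ} (W : Matrix (Fin n) (Fin n) ℝ) (b : Fin n → ℝ)
    (σ : Finset (Fin n)) (i : Fin n) : ℝ :=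
  (Matrix.updateCol
      ((1 : Matrix {x // x ∈ insert i σ} {x // x ∈ insert i σ} ℝ)
        - W.submatrix Subtype.val Subtype.val)
      ⟨i, Finset.mem_insert_self i σ⟩ (fun p => b p.val)).det

/-- The TLN `(W, b)` is competitive. -/
def Competitive {n : ℕ} (W : Matrix (Fin n) (Fin n) ℝ) (b : Fin n → ℝ) : Prop :=
  (∀ i j, W i j ≤ 0) ∧ (∀ i, W i i = 0) ∧ (∀ i, 0 ≤ b i)

/-- The TLN `(W, b)` is nondegenerate. -/
def Nondegenerate {n : ℕ} (W : Matrix (Fin n) (Fin n) ℝ) (b : Fin n → ℝ) : Prop :=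
  (∃ i, 0 < b i) ∧ (∀ σ : Finset (Fin n), detIW W σ ≠ 0) ∧
  (∀ σ : Finset (Fin n), (∀ i ∈ σ, 0 < b i) → ∀ i ∈ σ, cramerDet W b σ i ≠ 0)

/-- The CTLN connectivity matrix of the simple directed graph `G`
(here `G j i` means there is an edge `j → i` in `G`). -/
def ctlnW {n : ℕ} (G : Fin n → Fin n → Prop) [DecidableRel G] (ε δ : ℝ) :
    Matrix (Fin n) (Fin n) ℝ :=
  Matrix.of fun i j => if i = j then 0 else if G j i then -1 + ε else -1 - δ

/-- `k` graphically dominates `j` with respect to `σ`, in the directed graph `G`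
(where `G a b` means there is an edge `a → b`). -/
def GraphDominates {α : Type*} (G : α → α → Prop) (σ : Finset α) (k j : α) : Prop :=
  (j ∈ σ ∨ k ∈ σ) ∧
  (∀ i ∈ σ, i ≠ j → i ≠ k → G i j → G i k) ∧
  (j ∈ σ → G j k) ∧ (k ∈ σ → ¬ G k j)

/-- `w_j^σ := ∑_{i ∈ σ} (−I + W)_{j i} · |s_i^σ|`. -/
noncomputable def wval {n : ℕ} (W : Matrix (Fin n) (Fin n) ℝ) (b : Fin n → ℝ)
    (σ : Finset (Fin n)) (j : Fin n) : ℝ :=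
  ∑ i ∈ σ, (W j i - if j = i then 1 else 0) * |cramerDet W b σ i|

/-!
Restrict both fixed points to `τ = σ ∪ {k}`. The fixed point `y` supported on `τ` solves
`(I - W_τ) y = b_τ`, while `x`, supported on `σ`, solves the same system except in row `k`,
where it is off by its input `θ = (W x)_k + b_k ≤ 0`. Cramer's rule for the `k`-th coordinate
of `y - x`, whose minor is `det (I - W_σ)`, gives `det (I - W_τ) * y_k = θ * det (I - W_σ)`;
since `y_k > 0` and the determinants do not vanish, `θ < 0` and the signs are opposite.
-/

namespace Matrix

variable {ι R : Type*} [Fintype ι] [DecidableEq ι] [CommRing R]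

theorem det_updateCol_single_self (A : Matrix ι ι R) (i : ι) :
    (A.updateCol i (Pi.single i 1)).det =
      (A.submatrix ((↑) : {j // j ≠ i} → ι) (↑)).det := by
  rw [← det_submatrix_equiv_self (Equiv.sumCompl (· = i))]
  have : (A.updateCol i (Pi.single i 1)).submatrix (Equiv.sumCompl (· = i))
      (Equiv.sumCompl (· = i)) = fromBlocks 1 (A.submatrix (fun _ => i) (↑)) 0
        (A.submatrix (↑) (↑)) := by
    ext (⟨p, rfl⟩ | ⟨p, hp⟩) (⟨q, rfl⟩ | ⟨q, hq⟩) <;> simp [*]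
  rw [this, det_fromBlocks_zero₂₁, det_one, one_mul]

theorem det_mul_sub_apply_eq_of_mulVec_eq {A : Matrix ι ι R} {x y : ι → R} {i : ι} {c : R}
    (h : A *ᵥ y = A *ᵥ x + c • Pi.single i 1) :
    A.det * (y i - x i) = c * (A.updateCol i (Pi.single i 1)).det := by
  have hcramer : ∀ z, A.cramer (A *ᵥ z) = A.det • z := fun z => by
    rw [cramer_eq_adjugate_mulVec, mulVec_mulVec, adjugate_mul, smul_mulVec, one_mulVec]
  have := congr_fun (congrArg A.cramer h) i
  rw [map_add, map_smul, hcramer, hcramer] at this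
  simp only [Pi.add_apply, Pi.smul_apply, smul_eq_mul, cramer_apply] at this
  rw [mul_sub, this]; ring

end Matrix

theorem Real.sign_eq_neg_sign_of_mul_eq {a b c d : ℝ} (ha : a ≠ 0) (hc : 0 < c) (hd : d ≤ 0)
    (h : a * c = d * b) : Real.sign a = -Real.sign b := by
  rcases ha.lt_or_gt with ha | ha
  · have hb : 0 < b := by nlinarith
    rw [Real.sign_of_neg ha, Real.sign_of_pos hb]
  · have hb : b < 0 := by nlinarith
    rw [Real.sign_of_pos ha, Real.sign_of_neg hb, neg_neg]

abbrev oneSubW {n : ℕ} (W : Matrix (Fin n) (Fin n) ℝ) (τ : Finset (Fin n)) :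
    Matrix τ τ ℝ :=
  1 - W.submatrix Subtype.val Subtype.val

section TLN

variable {n : ℕ} {W : Matrix (Fin n) (Fin n) ℝ} {b : Fin n → ℝ}

namespace IsRestFixedPoint

variable {x : Fin n → ℝ} {i : Fin n}

theorem nonneg (hx : IsRestFixedPoint W b univ x) : 0 ≤ x i :=
  (hx.1 i (mem_univ i)).symm ▸ le_max_left _ _

theorem eq_of_pos (hx : IsRestFixedPoint W b univ x) (hi : 0 < x i) :
    x i = (W *ᵥ x) i + b i := by
  have hmax : x i = max 0 ((W *ᵥ x) i + b i) := hx.1 i (mem_univ i)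
  rcases le_or_gt ((W *ᵥ x) i + b i) 0 with h | h
  · rw [max_eq_left h] at hmax; linarith
  · rwa [max_eq_right h.le] at hmax

theorem eq_zero_of_notMem {σ : Finset (Fin n)} (hx : IsRestFixedPoint W b univ x)
    (hxσ : ∀ i, 0 < x i ↔ i ∈ σ) (hi : i ∉ σ) : x i = 0 :=
  le_antisymm (not_lt.1 (mt (hxσ i).1 hi)) hx.nonneg

theorem input_nonpos_of_eq_zero (hx : IsRestFixedPoint W b univ x) (hi : x i = 0) :
    (W *ᵥ x) i + b i ≤ 0 := by
  have hmax : x i = max 0 ((W *ᵥ x) i + b i) := hx.1 i (mem_univ i)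
  rw [hi] at hmax
  exact hmax ▸ le_max_right _ _

end IsRestFixedPoint

theorem oneSubW_mulVec_apply {τ : Finset (Fin n)} {x : Fin n → ℝ}
    (hx : ∀ j ∉ τ, x j = 0) (p : τ) :
    (oneSubW W τ *ᵥ fun q : τ => x q) p = x p - (W *ᵥ x) p := by
  rw [sub_mulVec, one_mulVec, Pi.sub_apply]
  congr 1
  simp only [mulVec, dotProduct, submatrix_apply]
  rw [sum_coe_sort τ (fun j => W p j * x j)]
  exact sum_subset (subset_univ τ) fun j _ hj => by rw [hx j hj, mul_zero]

theorem det_updateCol_oneSubW_single {τ : Finset (Fin n)} {k : Fin n} (hk : k ∈ τ) :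
    ((oneSubW W τ).updateCol ⟨k, hk⟩ (Pi.single ⟨k, hk⟩ 1)).det =
      detIW W (τ.erase k) := by
  let e : {j : τ // j ≠ ⟨k, hk⟩} ≃ τ.erase k :=
    { toFun := fun j => ⟨j.1, mem_erase.2 ⟨fun h => j.2 (Subtype.ext h), j.1.2⟩⟩
      invFun := fun j => ⟨⟨j, mem_of_mem_erase j.2⟩,
        fun h => ne_of_mem_erase j.2 (congrArg Subtype.val h)⟩
      left_inv := fun _ => rfl
      right_inv := fun _ => rfl }
  rw [det_updateCol_single_self, detIW, ← det_submatrix_equiv_self e]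
  congr 1
  ext p q
  simp only [submatrix_apply, Matrix.sub_apply, one_apply, e.apply_eq_iff_eq, Subtype.coe_inj]
  rfl

theorem detIW_insert_mul_eq {σ : Finset (Fin n)} {k : Fin n} (hk : k ∉ σ) {x y : Fin n → ℝ}
    (hx : IsRestFixedPoint W b univ x) (hxσ : ∀ i, 0 < x i ↔ i ∈ σ)
    (hy : IsRestFixedPoint W b univ y) (hyσ : ∀ i, 0 < y i ↔ i ∈ insert k σ) :
    detIW W (insert k σ) * y k = ((W *ᵥ x) k + b k) * detIW W σ := by
  have hkτ : k ∈ insert k σ := mem_insert_self k σ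
  have hx0 : ∀ j ∉ σ, x j = 0 := fun _ => hx.eq_zero_of_notMem hxσ
  have hy0 : ∀ j ∉ insert k σ, y j = 0 := fun _ => hy.eq_zero_of_notMem hyσ
  have hxτ0 : ∀ j ∉ insert k σ, x j = 0 := fun j hj => hx0 j fun h => hj (mem_insert_of_mem h)
  -- `y` solves `(I - W_τ) z = b_τ`; `x` solves it except in row `k`, off by its input there
  have hlin : oneSubW W (insert k σ) *ᵥ (fun q : ↥(insert k σ) => y q) =
      oneSubW W (insert k σ) *ᵥ (fun q : ↥(insert k σ) => x q) +
        ((W *ᵥ x) k + b k) • Pi.single ⟨k, hkτ⟩ 1 := by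
    ext p
    rw [Pi.add_apply, oneSubW_mulVec_apply hy0, oneSubW_mulVec_apply hxτ0,
      hy.eq_of_pos ((hyσ p).2 p.2)]
    by_cases hp : p = ⟨k, hkτ⟩
    · subst hp
      simp [hx0 k hk]
    · have hpσ : (p : Fin n) ∈ σ := (mem_insert.1 p.2).resolve_left fun h => hp (Subtype.ext h)
      rw [Pi.smul_apply, Pi.single_eq_of_ne hp, hx.eq_of_pos ((hxσ p).2 hpσ)]
      simp
  have := det_mul_sub_apply_eq_of_mulVec_eq hlin
  rwa [det_updateCol_oneSubW_single, erase_insert hk, hx0 k hk, sub_zero] at this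

end TLN

theorem alternation_general {n : ℕ} (W : Matrix (Fin n) (Fin n) ℝ) (b : Fin n → ℝ)
    (hnd : Nondegenerate W b)
    (σ : Finset (Fin n)) (k : Fin n) (hk : k ∉ σ)
    (h1 : memFP W b Finset.univ σ) (h2 : memFP W b Finset.univ (insert k σ)) :
    Real.sign (detIW W (insert k σ)) = - Real.sign (detIW W σ) := by
  obtain ⟨x, hx, hxσ⟩ := h1
  obtain ⟨y, hy, hyσ⟩ := h2
  have hxk : x k = 0 := hx.eq_zero_of_notMem hxσ hk
  exact Real.sign_eq_neg_sign_of_mul_eq (hnd.2.1 _) ((hyσ k).2 (mem_insert_self k σ))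
    (hx.input_nonpos_of_eq_zero hxk) (detIW_insert_mul_eq hk hx hxσ hy hyσ)

/-- **Alternation.** For a competitive nondegenerate TLN `(W, b)`: if both `σ` and
`σ ∪ {k}` (with `k ∉ σ`) are fixed point supports of `(W, b)`, then
`sgn det(I − W_{σ∪{k}}) = − sgn det(I − W_σ)`. -/
theorem alternation {n : ℕ} (W : Matrix (Fin n) (Fin n) ℝ) (b : Fin n → ℝ)
    (hW : Competitive W b) (hnd : Nondegenerate W b)
    (σ : Finset (Fin n)) (k : Fin n) (hk : k ∉ σ)
    (h1 : memFP W b Finset.univ σ) (h2 : memFP W b Finset.univ (insert k σ)) :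
    Real.sign (detIW W (insert k σ)) = - Real.sign (detIW W σ) :=
  alternation_general W b hnd σ k hk h1 h2
end

section
/- Simply-added splits. Let G be a simple directed graph on [n] with CTLN parameters in the legal range, and let τ, ω ⊂ [n] be nonempty disjoint sets such that ω is simply-added to τ, i.e. every k ∈ ω is either a projector onto τ (k→i for all i ∈ τ) or a non-projector onto τ (k↛i for all i ∈ τ). Then for every σ ⊆ τ ∪ ω and every i ∈ τ, s_i^σ = (1/θ) · s_i^{σ∩ω} · s_i^{σ∩τ}, where by convention s_i^∅ = θ; moreover the factor s_i^{σ∩ω} has the same value for every i ∈ τ. -/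
open Matrix Finset

/-!
For `i ∈ τ`, every row of `I - W` indexed by `τ` agrees with row `i` on the columns in `ω`
(a simply-added `k ∈ ω` sends the same weight to all of `τ`), and the replaced column is
constant. Subtracting row `i` from the other rows of `σ ∩ τ` therefore makes the matrix of
`s_i^σ` block triangular, with the matrix of `s_i^{σ∩ω}` as one diagonal block; the same row
operation reduces the matrix of `s_i^{σ∩τ}` to `θ` times the other block. For the same reason
the matrices of `s_i^{σ∩ω}` and `s_j^{σ∩ω}` coincide after renaming `i` to `j`.
-/

section PrincipalMinor

variable {ι R : Type*} [DecidableEq ι] [CommRing R]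

noncomputable def principalMinor (A : Matrix ι ι R) (s : Finset ι) : R :=
  (A.submatrix (Subtype.val : s → ι) Subtype.val).det

theorem det_submatrix_eq_principalMinor {κ : Type*} [Fintype κ] [DecidableEq κ]
    (A : Matrix ι ι R) (s : Finset ι) (e : κ ≃ s) (f : κ → ι) (hf : ∀ k, (e k : ι) = f k) :
    (A.submatrix f f).det = principalMinor A s := by
  rw [principalMinor, ← det_submatrix_equiv_self e]
  congr 1
  ext k l
  simp [hf]

theorem principalMinor_congr {A B : Matrix ι ι R} {s : Finset ι}
    (h : ∀ p ∈ s, ∀ q ∈ s, A p q = B p q) : principalMinor A s = principalMinor B s := by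
  unfold principalMinor
  congr 1
  ext p q
  exact h p p.2 q q.2

theorem principalMinor_singleton (A : Matrix ι ι R) (i : ι) : principalMinor A {i} = A i i :=
  det_unique _

theorem principalMinor_reindex (A B : Matrix ι ι R) {s t : Finset ι} (e : ι ≃ ι)
    (he : ∀ x, x ∈ s ↔ e x ∈ t) (h : ∀ x ∈ s, ∀ y ∈ s, B (e x) (e y) = A x y) :
    principalMinor B t = principalMinor A s := by
  rw [← det_submatrix_eq_principalMinor B t (e.subtypeEquiv he) (fun x => e x) fun _ => rfl]
  unfold principalMinor
  congr 1
  ext p q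
  exact h p p.2 q q.2

theorem principalMinor_add_mul_row (A : Matrix ι ι R) {s : Finset ι} {i : ι} (hi : i ∈ s)
    (c : ι → R) (hc : c i = 0) :
    principalMinor (of fun p q => A p q + c p * A i q) s = principalMinor A s :=
  det_eq_of_forall_row_eq_smul_add_const (fun p : s => c p) ⟨i, hi⟩ hc fun _ _ => rfl

theorem principalMinor_eq_mul_of_blockTriangular (A : Matrix ι ι R) {s t : Finset ι} (hts : t ⊆ s)
    (h : ∀ p ∈ s \ t, ∀ q ∈ t, A p q = 0) :
    principalMinor A s = principalMinor A t * principalMinor A (s \ t) := by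
  rw [principalMinor, (A.submatrix (Subtype.val : s → ι) Subtype.val).twoBlockTriangular_det
    (fun p => (p : ι) ∈ t) fun p hp q hq => h p (mem_sdiff.2 ⟨p.2, hp⟩) q hq]
  congr 1
  · exact det_submatrix_eq_principalMinor A t (Equiv.subtypeSubtypeEquivSubtype (hts ·))
      _ fun _ => rfl
  · exact det_submatrix_eq_principalMinor A (s \ t)
      ((Equiv.subtypeSubtypeEquivSubtypeInter _ _).trans (Equiv.subtypeEquivRight
        fun _ => mem_sdiff.symm)) _ fun _ => rfl

end PrincipalMinor

section CramerDet

variable {n : ℕ} (W : Matrix (Fin n) (Fin n) ℝ) (b : Fin n → ℝ)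

theorem cramerDet_eq_principalMinor (s : Finset (Fin n)) (i : Fin n) :
    cramerDet W b s i = principalMinor (updateCol (1 - W) i b) (insert i s) := by
  unfold cramerDet principalMinor
  congr 1
  ext p q
  simp only [updateCol_apply, Subtype.ext_iff, Matrix.sub_apply, submatrix_apply, one_apply]

theorem cramerDet_eq_of_rows_eq {s : Finset (Fin n)} {i j : Fin n} (hi : i ∉ s) (hj : j ∉ s)
    (hb : b i = b j) (hW : ∀ q ∈ s, W i q = W j q) :
    cramerDet W b s i = cramerDet W b s j := by
  have hswap : ∀ x ∈ s, Equiv.swap i j x = x := fun x hx =>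
    Equiv.swap_apply_of_ne_of_ne (ne_of_mem_of_not_mem hx hi) (ne_of_mem_of_not_mem hx hj)
  rw [cramerDet_eq_principalMinor, cramerDet_eq_principalMinor]
  refine (principalMinor_reindex _ _ (Equiv.swap i j) (fun x => ?_) fun x hx y hy => ?_).symm
  · simp only [mem_insert, Equiv.swap_apply_def]
    split_ifs <;> grind
  · rcases mem_insert.1 hx with rfl | hxs <;> rcases mem_insert.1 hy with rfl | hys
    · simp [hb]
    · have hyx := ne_of_mem_of_not_mem hys hi
      have hyj := ne_of_mem_of_not_mem hys hj
      simp [hswap y hys, one_apply, hW y hys, hyx, hyj, hyx.symm, hyj.symm]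
    · simp [hswap x hxs]
    · simp [hswap x hxs, hswap y hys, ne_of_mem_of_not_mem hys hi, ne_of_mem_of_not_mem hys hj]

theorem mul_cramerDet_eq_cramerDet_inter_mul {τ ω σ : Finset (Fin n)} (hdisj : Disjoint τ ω)
    (hσ : σ ⊆ τ ∪ ω) {i : Fin n} (hi : i ∈ τ) (hb : ∀ p ∈ τ, b p = b i)
    (hW : ∀ p ∈ τ, ∀ q ∈ ω, W p q = W i q) :
    b i * cramerDet W b σ i = cramerDet W b (σ ∩ ω) i * cramerDet W b (σ ∩ τ) i := by
  set A := updateCol (1 - W) i b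
  set T := (σ ∩ τ).erase i
  -- subtracting row `i` from the rows in `T` clears the block `T × ({i} ∪ ω)`
  set A' : Matrix (Fin n) (Fin n) ℝ := of fun p q => A p q + (if p ∈ T then -1 else 0) * A i q
  have hrow (s : Finset (Fin n)) (his : i ∈ s) : principalMinor A' s = principalMinor A s :=
    principalMinor_add_mul_row A his _ (by simp [T])
  have hzero : ∀ p ∈ T, ∀ q ∈ insert i ω, A' p q = 0 := by
    intro p hp q hq
    have hpτ : p ∈ τ := (mem_inter.1 (mem_of_mem_erase hp)).2
    rcases mem_insert.1 hq with rfl | hqω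
    · simp [A', A, hp, hb p hpτ]
    have hqi : q ≠ i := fun h => disjoint_left.1 hdisj hi (h ▸ hqω)
    have hqp : q ≠ p := fun h => disjoint_left.1 hdisj hpτ (h ▸ hqω)
    simp [A', A, hp, hqi, hqp.symm, hqi.symm, one_apply, hW p hpτ q hqω]
  have hT₁ : insert i σ \ insert i (σ ∩ ω) = T := by
    ext x
    have := @hσ x
    have := @disjoint_left.1 hdisj x
    simp only [T, mem_sdiff, mem_insert, mem_inter, mem_erase, mem_union] at *
    grind
  have hT₂ : insert i (σ ∩ τ) \ {i} = T := by
    ext x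
    simp only [T, mem_sdiff, mem_insert, mem_inter, mem_erase, mem_singleton]
    grind
  have hω : principalMinor A' (insert i σ)
      = principalMinor A (insert i (σ ∩ ω)) * principalMinor A' T := by
    rw [principalMinor_eq_mul_of_blockTriangular A' (insert_subset_insert _ inter_subset_left)
      fun p hp q hq => hzero p (hT₁ ▸ hp) q (insert_subset_insert _ inter_subset_right hq), hT₁]
    congr 1
    refine principalMinor_congr fun p hp q _ => ?_
    have hpT : p ∉ T := fun h => (mem_sdiff.1 (hT₁ ▸ h)).2 hp
    simp [A', hpT]
  have hτ : principalMinor A' (insert i (σ ∩ τ)) = b i * principalMinor A' T := by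
    rw [principalMinor_eq_mul_of_blockTriangular A' (singleton_subset_iff.2 (mem_insert_self _ _))
      fun p hp q hq => hzero p (hT₂ ▸ hp) q (singleton_subset_iff.2 (mem_insert_self i ω) hq),
      hT₂, principalMinor_singleton]
    simp [A', A, T]
  rw [cramerDet_eq_principalMinor, cramerDet_eq_principalMinor, cramerDet_eq_principalMinor,
    ← hrow _ (mem_insert_self _ _), ← hrow (insert i (σ ∩ τ)) (mem_insert_self _ _), hω, hτ]
  ring

end CramerDet

theorem ctlnW_apply_eq_of_simplyAdded {n : ℕ} {G : Fin n → Fin n → Prop} [DecidableRel G]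
    (ε δ : ℝ) {τ : Finset (Fin n)} {p p' q : Fin n} (hqτ : q ∉ τ)
    (hq : (∀ i ∈ τ, G q i) ∨ ∀ i ∈ τ, ¬ G q i) (hp : p ∈ τ) (hp' : p' ∈ τ) :
    ctlnW G ε δ p q = ctlnW G ε δ p' q := by
  have hpq : p ≠ q := ne_of_mem_of_not_mem hp hqτ
  have hp'q : p' ≠ q := ne_of_mem_of_not_mem hp' hqτ
  rcases hq with h | h <;> simp [ctlnW, hpq, hp'q, h p hp, h p' hp']

theorem simply_added_splits_general {n : ℕ} (G : Fin n → Fin n → Prop) [DecidableRel G]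
    (ε δ θ : ℝ) (hθ : 0 < θ)
    (W : Matrix (Fin n) (Fin n) ℝ) (hWdef : W = ctlnW G ε δ)
    (b : Fin n → ℝ) (hbdef : b = fun _ => θ)
    (τ ω : Finset (Fin n)) (hdisj : Disjoint τ ω)
    (hsa : ∀ k ∈ ω, (∀ i ∈ τ, G k i) ∨ (∀ i ∈ τ, ¬ G k i))
    (σ : Finset (Fin n)) (hσ : σ ⊆ τ ∪ ω) :
    (∀ i ∈ τ, cramerDet W b σ i
        = (1 / θ) * (cramerDet W b (σ ∩ ω) i * cramerDet W b (σ ∩ τ) i)) ∧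
    (∀ i ∈ τ, ∀ j ∈ τ, cramerDet W b (σ ∩ ω) i = cramerDet W b (σ ∩ ω) j) := by
  subst hWdef hbdef
  have hrows : ∀ i ∈ τ, ∀ p ∈ τ, ∀ q ∈ ω, ctlnW G ε δ p q = ctlnW G ε δ i q :=
    fun i hi p hp q hq => ctlnW_apply_eq_of_simplyAdded ε δ (disjoint_right.1 hdisj hq)
      (hsa q hq) hp hi
  have hnotMem : ∀ i ∈ τ, i ∉ σ ∩ ω := fun i hi h => disjoint_left.1 hdisj hi (mem_inter.1 h).2
  refine ⟨fun i hi => ?_, fun i hi j hj => ?_⟩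
  · rw [← mul_cramerDet_eq_cramerDet_inter_mul _ _ hdisj hσ hi (fun _ _ => rfl) (hrows i hi)]
    field_simp
  · exact cramerDet_eq_of_rows_eq _ _ (hnotMem i hi) (hnotMem j hj) rfl
      fun q hq => hrows j hj i hi q (mem_inter.1 hq).2

/-- **Simply-added splits.** Let `G` be a simple directed graph with CTLN parameters in the
legal range, and let `τ, ω` be nonempty disjoint subsets of `[n]` such that `ω` is
simply-added to `τ` (each `k ∈ ω` is either a projector or a non-projector onto `τ`).
Then for every `σ ⊆ τ ∪ ω` and every `i ∈ τ`,
`s_i^σ = (1/θ) · s_i^{σ∩ω} · s_i^{σ∩τ}`, and the factor `s_i^{σ∩ω}` has the same value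
for every `i ∈ τ`. (With this encoding `s_i^∅ = θ` automatically.) -/
theorem simply_added_splits {n : ℕ} (G : Fin n → Fin n → Prop) [DecidableRel G]
    (hGirr : ∀ i, ¬ G i i) (ε δ θ : ℝ)
    (hθ : 0 < θ) (hδ : 0 < δ) (hε : 0 < ε) (hεδ : ε < δ / (δ + 1))
    (W : Matrix (Fin n) (Fin n) ℝ) (hWdef : W = ctlnW G ε δ)
    (b : Fin n → ℝ) (hbdef : b = fun _ => θ)
    (τ ω : Finset (Fin n)) (hτ : τ.Nonempty) (hω : ω.Nonempty) (hdisj : Disjoint τ ω)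
    (hsa : ∀ k ∈ ω, (∀ i ∈ τ, G k i) ∨ (∀ i ∈ τ, ¬ G k i))
    (σ : Finset (Fin n)) (hσ : σ ⊆ τ ∪ ω) :
    (∀ i ∈ τ, cramerDet W b σ i
        = (1 / θ) * (cramerDet W b (σ ∩ ω) i * cramerDet W b (σ ∩ τ) i)) ∧
    (∀ i ∈ τ, ∀ j ∈ τ, cramerDet W b (σ ∩ ω) i = cramerDet W b (σ ∩ ω) j) :=
  simply_added_splits_general G ε δ θ hθ W hWdef b hbdef τ ω hdisj hsa σ hσ
end

section
/- One bad apple. Let G be a simple directed graph on [n] with CTLN parameters in the legal range, and let σ ⊆ [n] be partitioned into nonempty sets σ_1,…,σ_N such that for every pair i ≠ j, either every node of σ_i sends an edge in G to every node of σ_j, or no node of σ_i sends an edge to any node of σ_j (i.e. G|_σ is a composite graph with components G|_{σ_1},…,G|_{σ_N}). If σ_i ∉ FP(G|_{σ_i}) for some i ∈ [N] (i.e. some component is a forbidden motif), then σ ∉ FP(G|_σ) (σ is a forbidden motif). -/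
open Matrix Finset

/-
Restricting a fixed point supported on `σ` to a component `σ_k` of the composite graph leaves each
node of `σ_k` with the same input from `σ \ σ_k`, because between components the connection weights
depend only on the component. That input just shifts the uniform bias `θ` to some `θ'`, and `θ' > 0`
since a node of `σ_k` is active while all weights inside `σ_k` are inhibitory. The TLN equations are
homogeneous in `(x, b)`, so rescaling by `θ / θ'` turns the restriction into a full-support fixed
point of `G|_{σ_k}`.
-/

section FixedPoint

variable {n : ℕ} {W : Matrix (Fin n) (Fin n) ℝ} {b : Fin n → ℝ} {τ : Finset (Fin n)}

theorem memFP_self_iff :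
    memFP W b τ τ ↔ ∃ x : Fin n → ℝ, ∀ i ∈ τ, 0 < x i ∧ x i = ∑ j ∈ τ, W i j * x j + b i := by
  constructor
  · rintro ⟨x, ⟨hfix, -⟩, hsupp⟩
    refine ⟨x, fun i hi => ⟨(hsupp i).2 hi, ?_⟩⟩
    have hpos := (hsupp i).2 hi
    rw [hfix i hi] at hpos ⊢
    exact max_eq_right ((lt_max_iff.1 hpos).resolve_left (lt_irrefl 0)).le
  · rintro ⟨x, hx⟩
    let y : Fin n → ℝ := fun i => if i ∈ τ then x i else 0
    have hsum : ∀ i, ∑ j ∈ τ, W i j * y j = ∑ j ∈ τ, W i j * x j := fun i =>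
      sum_congr rfl fun j hj => by simp only [y, if_pos hj]
    refine ⟨y, ⟨fun i hi => ?_, fun i hi => if_neg hi⟩, fun i => ?_⟩
    · rw [hsum, ← (hx i hi).2, max_eq_right (hx i hi).1.le]
      exact if_pos hi
    · by_cases hi : i ∈ τ
      · simp [y, hi, (hx i hi).1]
      · simp [y, hi]

theorem memFP_self_smul {c : ℝ} (hc : 0 < c) (h : memFP W b τ τ) : memFP W (c • b) τ τ := by
  obtain ⟨x, hx⟩ := memFP_self_iff.1 h
  refine memFP_self_iff.2 ⟨c • x, fun i hi => ⟨mul_pos hc (hx i hi).1, ?_⟩⟩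
  simp only [Pi.smul_apply, smul_eq_mul, mul_left_comm _ c, ← mul_sum]
  rw [(hx i hi).2]
  ring

theorem memFP_self_of_uniform_input {σ : Finset (Fin n)} {θ : ℝ} (hθ : 0 < θ) (hτσ : τ ⊆ σ)
    (hτ : τ.Nonempty) (hW : ∀ i ∈ τ, ∀ j ∈ τ, W i j ≤ 0)
    (hinput : ∀ i ∈ τ, ∀ i' ∈ τ, ∀ j ∈ σ \ τ, W i j = W i' j)
    (hσ : memFP W (fun _ => θ) σ σ) : memFP W (fun _ => θ) τ τ := by
  obtain ⟨x, hx⟩ := memFP_self_iff.1 hσ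
  obtain ⟨i₀, hi₀⟩ := hτ
  set θ' := θ + ∑ j ∈ σ \ τ, W i₀ j * x j
  have hτeq : ∀ i ∈ τ, x i = ∑ j ∈ τ, W i j * x j + θ' := by
    intro i hi
    have hsplit := sum_sdiff (f := fun j => W i j * x j) hτσ
    rw [(hx i (hτσ hi)).2, ← hsplit,
      sum_congr rfl fun j hj => by rw [hinput i hi i₀ hi₀ j hj]]
    ring
  have hθ' : 0 < θ' := by
    have hinner : ∑ j ∈ τ, W i₀ j * x j ≤ 0 :=
      sum_nonpos fun j hj => mul_nonpos_of_nonpos_of_nonneg (hW i₀ hi₀ j hj) (hx j (hτσ hj)).1.le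
    linarith [hτeq i₀ hi₀, (hx i₀ (hτσ hi₀)).1]
  have hτfp : memFP W (fun _ => θ') τ τ :=
    memFP_self_iff.2 ⟨x, fun i hi => ⟨(hx i (hτσ hi)).1, hτeq i hi⟩⟩
  convert memFP_self_smul (div_pos hθ hθ') hτfp using 1
  ext
  simp [hθ'.ne']

end FixedPoint

section CTLN

variable {n : ℕ} {G : Fin n → Fin n → Prop} [DecidableRel G] {ε δ : ℝ}

theorem ctlnW_nonpos (hε : ε ≤ 1) (hδ : 0 ≤ δ) (i j : Fin n) : ctlnW G ε δ i j ≤ 0 := by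
  simp only [ctlnW, Matrix.of_apply]
  split_ifs <;> linarith

theorem ctlnW_apply_eq_of_iff {i i' j : Fin n} (hij : i ≠ j) (hi'j : i' ≠ j)
    (hG : G j i ↔ G j i') : ctlnW G ε δ i j = ctlnW G ε δ i' j := by
  simp only [ctlnW, Matrix.of_apply, if_neg hij, if_neg hi'j, hG]

theorem ctlnW_uniform_input_of_composite {N : ℕ} {σ : Finset (Fin n)} {P : Fin N → Finset (Fin n)}
    (hcover : σ = univ.biUnion P)
    (hcomp : ∀ k l : Fin N, k ≠ l →
      (∀ u ∈ P k, ∀ v ∈ P l, G u v) ∨ (∀ u ∈ P k, ∀ v ∈ P l, ¬ G u v))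
    (k : Fin N) : ∀ i ∈ P k, ∀ i' ∈ P k, ∀ j ∈ σ \ P k, ctlnW G ε δ i j = ctlnW G ε δ i' j := by
  intro i hi i' hi' j hj
  obtain ⟨hjσ, hjk⟩ := mem_sdiff.1 hj
  obtain ⟨l, -, hjl⟩ := mem_biUnion.1 (hcover ▸ hjσ)
  have hlk : l ≠ k := by rintro rfl; exact hjk hjl
  refine ctlnW_apply_eq_of_iff (by rintro rfl; exact hjk hi) (by rintro rfl; exact hjk hi') ?_
  rcases hcomp l k hlk with hall | hnone
  · exact iff_of_true (hall j hjl i hi) (hall j hjl i' hi')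
  · exact iff_of_false (hnone j hjl i hi) (hnone j hjl i' hi')

end CTLN

theorem one_bad_apple_general {n N : ℕ} (G : Fin n → Fin n → Prop) [DecidableRel G]
    (ε δ θ : ℝ)
    (hθ : 0 < θ) (hδ : 0 < δ) (hεδ : ε < δ / (δ + 1))
    (W : Matrix (Fin n) (Fin n) ℝ) (hWdef : W = ctlnW G ε δ)
    (b : Fin n → ℝ) (hbdef : b = fun _ => θ)
    (σ : Finset (Fin n)) (P : Fin N → Finset (Fin n))
    (hne : ∀ i, (P i).Nonempty)
    (hcover : σ = Finset.univ.biUnion P)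
    (hcomp : ∀ i j : Fin N, i ≠ j →
      ((∀ u ∈ P i, ∀ v ∈ P j, G u v) ∨ (∀ u ∈ P i, ∀ v ∈ P j, ¬ G u v)))
    (hbad : ∃ i : Fin N, ¬ memFP W b (P i) (P i)) :
    ¬ memFP W b σ σ := by
  subst hWdef hbdef
  obtain ⟨k, hk⟩ := hbad
  have hε : ε ≤ 1 := hεδ.le.trans ((div_le_one (by linarith)).2 (by linarith))
  have hPσ : P k ⊆ σ := hcover ▸ subset_biUnion_of_mem P (mem_univ k)
  exact fun hσ => hk <| memFP_self_of_uniform_input hθ hPσ (hne k)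
    (fun i _ j _ => ctlnW_nonpos hε hδ.le i j) (ctlnW_uniform_input_of_composite hcover hcomp k) hσ

/-- **One bad apple.** Let `G` be a simple directed graph with CTLN parameters in the legal
range, and let `σ` be partitioned into nonempty sets `σ_1, …, σ_N` such that `G|_σ` is a
composite graph with components `G|_{σ_i}` (between any two distinct components, either
all edges are present or none are). If some component `σ_i` is a forbidden motif
(`σ_i ∉ FP(G|_{σ_i})`), then `σ` is a forbidden motif (`σ ∉ FP(G|_σ)`). -/
theorem one_bad_apple {n N : ℕ} (G : Fin n → Fin n → Prop) [DecidableRel G]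
    (hGirr : ∀ i, ¬ G i i) (ε δ θ : ℝ)
    (hθ : 0 < θ) (hδ : 0 < δ) (hε : 0 < ε) (hεδ : ε < δ / (δ + 1))
    (W : Matrix (Fin n) (Fin n) ℝ) (hWdef : W = ctlnW G ε δ)
    (b : Fin n → ℝ) (hbdef : b = fun _ => θ)
    (σ : Finset (Fin n)) (P : Fin N → Finset (Fin n))
    (hne : ∀ i, (P i).Nonempty)
    (hdisj : ∀ i j, i ≠ j → Disjoint (P i) (P j))
    (hcover : σ = Finset.univ.biUnion P)
    (hcomp : ∀ i j : Fin N, i ≠ j →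
      ((∀ u ∈ P i, ∀ v ∈ P j, G u v) ∨ (∀ u ∈ P i, ∀ v ∈ P j, ¬ G u v)))
    (hbad : ∃ i : Fin N, ¬ memFP W b (P i) (P i)) :
    ¬ memFP W b σ σ :=
  one_bad_apple_general G ε δ θ hθ hδ hεδ W hWdef b hbdef σ P hne hcover hcomp hbad
end

section
/- Instability from an unstable uniform in-degree component. Let G be a simple directed graph on [n] with CTLN parameters in the legal range, and let σ ⊆ [n] be partitioned into nonempty sets σ_1,…,σ_N such that for every pair i ≠ j, either every node of σ_i sends an edge in G to every node of σ_j, or no node of σ_i sends an edge to any node of σ_j (i.e. G|_σ is a composite graph with components G|_{σ_1},…,G|_{σ_N}). If some component σ_i has uniform in-degree (every vertex of σ_i has the same number of in-neighbors within G|_{σ_i}) and the matrix I − W_{σ_i} has an eigenvalue with negative real part, then I − W_σ also has an eigenvalue with negative real part (σ is unstable). -/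
open Matrix Finset

/-!
Uniform in-degree `d` on `σ_i` makes every row of `I - W_{σ_i}` sum to
`ρ = 1 + d(1 - ε) + (|σ_i| - 1 - d)(1 + δ) > 0`, so the all-ones vector is a right eigenvector
for `ρ`, and a left eigenvector `v` for an eigenvalue `μ` with `Re μ < 0` has `∑ v = 0`.
In a composite graph a node `p ∈ σ \ σ_i` sends an edge to all of `σ_i` or to none of it, so the
column `p` of `I - W` is constant on the rows of `σ_i`. Hence `v`, extended by zero to `σ`, is a
left eigenvector of `I - W_σ` for the same `μ`.
-/

namespace Matrix

variable {ι K : Type*} [Field K]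

theorem map_one_sub_submatrix {l α β : Type*} [DecidableEq l] [DecidableEq ι]
    [Zero α] [One α] [Sub α] (f : α → β) (W : Matrix ι ι α) {e : l → ι}
    (he : Function.Injective e) :
    (1 - W.submatrix e e).map f = ((1 - W).map f).submatrix e e := by
  ext i j
  simp [one_apply, he.eq_iff]

theorem isRoot_charpoly_iff_exists_vecMul_eq [Fintype ι] [DecidableEq ι] (M : Matrix ι ι K)
    (μ : K) :
    M.charpoly.IsRoot μ ↔ ∃ v ≠ 0, v ᵥ* M = μ • v := by
  rw [Polynomial.IsRoot, eval_charpoly, ← exists_vecMul_eq_zero_iff]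
  simp [vecMul_sub, sub_eq_zero, eq_comm, scalar_apply]

/-- A vector on `s` is encoded as a function on all of `ι` whose values off `s` are ignored. -/
def IsLeftEigenvectorOn (M : Matrix ι ι K) (s : Finset ι) (μ : K) (x : ι → K) : Prop :=
  (∃ q ∈ s, x q ≠ 0) ∧ ∀ p ∈ s, ∑ q ∈ s, x q * M q p = μ * x p

theorem isRoot_charpoly_submatrix_iff [DecidableEq ι] (M : Matrix ι ι K) (s : Finset ι) (μ : K) :
    (M.submatrix ((↑) : s → ι) (↑)).charpoly.IsRoot μ ↔
      ∃ x, M.IsLeftEigenvectorOn s μ x := by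
  rw [isRoot_charpoly_iff_exists_vecMul_eq]
  constructor
  · rintro ⟨v, hv, hvM⟩
    refine ⟨fun q => if hq : q ∈ s then v ⟨q, hq⟩ else 0, ?_, fun p hp => ?_⟩
    · obtain ⟨q, hq⟩ := Function.ne_iff.mp hv
      exact ⟨q, q.2, by simpa using hq⟩
    · have := congrFun hvM ⟨p, hp⟩
      simp only [vecMul, dotProduct, submatrix_apply, Pi.smul_apply, smul_eq_mul] at this
      simp only [hp, dite_true, ← this]
      rw [← Finset.sum_coe_sort s]
      simp
  · rintro ⟨x, ⟨q, hq, hxq⟩, hx⟩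
    refine ⟨fun q => x q, fun h => hxq (congrFun h ⟨q, hq⟩), funext fun p => ?_⟩
    simp only [vecMul, dotProduct, submatrix_apply, Pi.smul_apply, smul_eq_mul, ← hx p p.2]
    exact Finset.sum_coe_sort s fun q => x q * M q p

namespace IsLeftEigenvectorOn

variable {M : Matrix ι ι K} {s t : Finset ι} {μ : K} {x : ι → K}

/-- A left eigenvector is orthogonal to every right eigenvector of a different eigenvalue;
here the right eigenvector is the all-ones vector. -/
theorem sum_eq_zero (hx : M.IsLeftEigenvectorOn s μ x) {ρ : K}
    (hrow : ∀ q ∈ s, ∑ p ∈ s, M q p = ρ) (hμρ : μ ≠ ρ) : ∑ q ∈ s, x q = 0 := by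
  have : μ * ∑ q ∈ s, x q = ρ * ∑ q ∈ s, x q :=
    calc μ * ∑ q ∈ s, x q = ∑ p ∈ s, ∑ q ∈ s, x q * M q p := by
          rw [Finset.mul_sum]; exact Finset.sum_congr rfl fun p hp => (hx.2 p hp).symm
      _ = ∑ q ∈ s, x q * ∑ p ∈ s, M q p := by
          rw [Finset.sum_comm]; simp only [Finset.mul_sum]
      _ = ρ * ∑ q ∈ s, x q := by
          rw [Finset.mul_sum]
          exact Finset.sum_congr rfl fun q hq => by rw [hrow q hq, mul_comm]
  exact (mul_eq_mul_right_iff.mp this).resolve_left hμρ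

theorem extend [DecidableEq ι] (hx : M.IsLeftEigenvectorOn s μ x) (hst : s ⊆ t)
    (hsum : ∑ q ∈ s, x q = 0)
    (hcol : ∀ p ∈ t, p ∉ s → ∃ c, ∀ q ∈ s, M q p = c) :
    M.IsLeftEigenvectorOn t μ (s.piecewise x 0) := by
  obtain ⟨⟨q, hq, hxq⟩, hx⟩ := hx
  refine ⟨⟨q, hst hq, by rwa [Finset.piecewise_eq_of_mem _ _ _ hq]⟩, fun p hp => ?_⟩
  have hrestrict : ∑ q ∈ t, s.piecewise x 0 q * M q p = ∑ q ∈ s, x q * M q p := by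
    rw [← Finset.sum_subset hst fun q _ hq => by simp [hq]]
    exact Finset.sum_congr rfl fun q hq => by rw [Finset.piecewise_eq_of_mem _ _ _ hq]
  rw [hrestrict]
  by_cases hps : p ∈ s
  · rw [hx p hps, Finset.piecewise_eq_of_mem _ _ _ hps]
  · obtain ⟨c, hc⟩ := hcol p hp hps
    rw [Finset.piecewise_eq_of_notMem _ _ _ hps, Pi.zero_apply, mul_zero,
      Finset.sum_congr rfl fun q hq => by rw [hc q hq], ← Finset.sum_mul, hsum, zero_mul]

end IsLeftEigenvectorOn

end Matrix

section CTLN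

variable {n : ℕ} {G : Fin n → Fin n → Prop} [DecidableRel G] {ε δ : ℝ}

theorem one_sub_ctlnW_apply_of_ne {i j : Fin n} (h : i ≠ j) :
    (1 - ctlnW G ε δ) i j = if G j i then 1 - ε else 1 + δ := by
  by_cases hG : G j i <;> simp [ctlnW, h, hG] <;> ring

theorem sum_one_sub_ctlnW_of_inDegree (hGirr : ∀ i, ¬ G i i) {s : Finset (Fin n)}
    {r : Fin n} (hr : r ∈ s) {d : ℕ} (hd : (s.filter fun u => G u r).card = d) :
    ∑ u ∈ s, (1 - ctlnW G ε δ) r u = 1 + d * (1 - ε) + (s.card - 1 - d : ℕ) * (1 + δ) := by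
  have hin : ((s.erase r).filter fun u => G u r).card = d := by
    rw [Finset.filter_erase, Finset.erase_eq_of_notMem (by simp [hGirr]), hd]
  have hout : ((s.erase r).filter fun u => ¬ G u r).card = s.card - 1 - d := by
    have := Finset.card_filter_add_card_filter_not (s := s.erase r) (fun u => G u r)
    rw [hin, Finset.card_erase_of_mem hr] at this
    omega
  rw [← Finset.add_sum_erase _ _ hr,
    Finset.sum_congr rfl fun u hu => one_sub_ctlnW_apply_of_ne (Finset.ne_of_mem_erase hu).symm,
    Finset.sum_ite, Finset.sum_const, Finset.sum_const, hin, hout]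
  simp only [Matrix.sub_apply, one_apply_eq, ctlnW, of_apply, ↓reduceIte, nsmul_eq_mul]
  ring

theorem exists_forall_one_sub_ctlnW_eq {s : Finset (Fin n)} {p : Fin n} (hp : p ∉ s)
    (h : (∀ u ∈ s, G p u) ∨ ∀ u ∈ s, ¬ G p u) :
    ∃ c, ∀ u ∈ s, (1 - ctlnW G ε δ) u p = c := by
  have hne : ∀ u ∈ s, u ≠ p := fun u hu hup => hp (hup ▸ hu)
  rcases h with h | h
  · exact ⟨1 - ε, fun u hu => by rw [one_sub_ctlnW_apply_of_ne (hne u hu), if_pos (h u hu)]⟩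
  · exact ⟨1 + δ, fun u hu => by rw [one_sub_ctlnW_apply_of_ne (hne u hu), if_neg (h u hu)]⟩

end CTLN

theorem composite_unstable_general {n N : ℕ} (G : Fin n → Fin n → Prop) [DecidableRel G]
    (hGirr : ∀ i, ¬ G i i) (ε δ : ℝ)
    (hδ : 0 < δ) (hεδ : ε < δ / (δ + 1))
    (W : Matrix (Fin n) (Fin n) ℝ) (hWdef : W = ctlnW G ε δ)
    (σ : Finset (Fin n)) (P : Fin N → Finset (Fin n))
    (hcover : σ = Finset.univ.biUnion P)
    (hcomp : ∀ i j : Fin N, i ≠ j →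
      ((∀ u ∈ P i, ∀ v ∈ P j, G u v) ∨ (∀ u ∈ P i, ∀ v ∈ P j, ¬ G u v)))
    (i₀ : Fin N) (d : ℕ)
    (hunif : ∀ v ∈ P i₀, ((P i₀).filter (fun u => G u v)).card = d)
    (hunstable : ∃ μ : ℂ,
      (Matrix.charpoly
        (((1 : Matrix {x // x ∈ P i₀} {x // x ∈ P i₀} ℝ)
            - W.submatrix Subtype.val Subtype.val).map Complex.ofReal)).IsRoot μ ∧
      μ.re < 0) :
    ∃ μ : ℂ,
      (Matrix.charpoly
        (((1 : Matrix {x // x ∈ σ} {x // x ∈ σ} ℝ)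
            - W.submatrix Subtype.val Subtype.val).map Complex.ofReal)).IsRoot μ ∧
      μ.re < 0 := by
  subst hWdef
  simp only [Matrix.map_one_sub_submatrix _ _ Subtype.val_injective,
    Matrix.isRoot_charpoly_submatrix_iff] at hunstable ⊢
  obtain ⟨μ, ⟨x, hx⟩, hμ⟩ := hunstable
  set ρ : ℝ := 1 + d * (1 - ε) + ((P i₀).card - 1 - d : ℕ) * (1 + δ)
  have hρ : 0 < ρ := by
    have hε : ε < 1 := hεδ.trans ((div_lt_one (by linarith)).mpr (by linarith))
    positivity
  have hrow : ∀ r ∈ P i₀, ∑ u ∈ P i₀, (1 - ctlnW G ε δ) r u = ρ :=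
    fun r hr => sum_one_sub_ctlnW_of_inDegree hGirr hr (hunif r hr)
  have hμρ : μ ≠ ρ := fun h => (hμ.trans hρ).ne (by rw [h, Complex.ofReal_re])
  have hsum := hx.sum_eq_zero
    (fun r hr => by simp only [Matrix.map_apply, ← Complex.ofReal_sum, hrow r hr]) hμρ
  have hsub : P i₀ ⊆ σ := hcover ▸ Finset.subset_biUnion_of_mem P (Finset.mem_univ i₀)
  refine ⟨μ, ⟨_, hx.extend hsub hsum fun p hp hpi => ?_⟩, hμ⟩
  obtain ⟨j, -, hpj⟩ := Finset.mem_biUnion.mp (hcover ▸ hp)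
  obtain ⟨c, hc⟩ := exists_forall_one_sub_ctlnW_eq (ε := ε) (δ := δ) hpi
    ((hcomp j i₀ fun h => hpi (h ▸ hpj)).imp (· p hpj) (· p hpj))
  exact ⟨c, fun u hu => by rw [Matrix.map_apply, hc u hu]⟩

/-- **Instability from an unstable uniform in-degree component.** Let `G` be a simple
directed graph with CTLN parameters in the legal range, and let `σ` be partitioned into
nonempty sets `σ_1, …, σ_N` forming a composite graph `G|_σ`. If some component `σ_i`
has uniform in-degree and `I − W_{σ_i}` has an eigenvalue with negative real part, then
`I − W_σ` also has an eigenvalue with negative real part. -/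
theorem composite_unstable {n N : ℕ} (G : Fin n → Fin n → Prop) [DecidableRel G]
    (hGirr : ∀ i, ¬ G i i) (ε δ θ : ℝ)
    (hθ : 0 < θ) (hδ : 0 < δ) (hε : 0 < ε) (hεδ : ε < δ / (δ + 1))
    (W : Matrix (Fin n) (Fin n) ℝ) (hWdef : W = ctlnW G ε δ)
    (σ : Finset (Fin n)) (P : Fin N → Finset (Fin n))
    (hne : ∀ i, (P i).Nonempty)
    (hdisj : ∀ i j, i ≠ j → Disjoint (P i) (P j))
    (hcover : σ = Finset.univ.biUnion P)
    (hcomp : ∀ i j : Fin N, i ≠ j →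
      ((∀ u ∈ P i, ∀ v ∈ P j, G u v) ∨ (∀ u ∈ P i, ∀ v ∈ P j, ¬ G u v)))
    (i₀ : Fin N) (d : ℕ)
    (hunif : ∀ v ∈ P i₀, ((P i₀).filter (fun u => G u v)).card = d)
    (hunstable : ∃ μ : ℂ,
      (Matrix.charpoly
        (((1 : Matrix {x // x ∈ P i₀} {x // x ∈ P i₀} ℝ)
            - W.submatrix Subtype.val Subtype.val).map Complex.ofReal)).IsRoot μ ∧
      μ.re < 0) :
    ∃ μ : ℂ,
      (Matrix.charpoly
        (((1 : Matrix {x // x ∈ σ} {x // x ∈ σ} ℝ)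
            - W.submatrix Subtype.val Subtype.val).map Complex.ofReal)).IsRoot μ ∧
      μ.re < 0 :=
  composite_unstable_general G hGirr ε δ hδ hεδ W hWdef σ P hcover hcomp i₀ d hunif hunstable
end

section
/- Strongly forbidden skeleton. Let G be a composite graph on vertex set V = τ_1 ∪ … ∪ τ_N with components G_1,…,G_N and skeleton Ĝ on [N]. If Ĝ is strongly forbidden, i.e. there exist ĵ, k̂ ∈ [N] such that k̂ graphically dominates ĵ with respect to [N] in Ĝ, then G is strongly forbidden: there exist j, k ∈ V such that k graphically dominates j with respect to V in G. More precisely, for any k ∈ τ_{k̂} and any j ∈ τ_{ĵ}, k graphically dominates j with respect to V. -/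
open Matrix Finset

theorem GraphDominates.ne {α : Type*} {H : α → α → Prop} {σ : Finset α} {k j : α}
    (h : GraphDominates H σ k j) : k ≠ j := by
  rintro rfl
  obtain ⟨hmem, -, hjk, hkj⟩ := h
  rcases hmem with hk | hk <;> exact hkj hk (hjk hk)

theorem GraphDominates.biUnion_of_skeleton {ι α : Type*} [Fintype ι] [DecidableEq α]
    {τ : ι → Finset α} {G : α → α → Prop} {Ghat : ι → ι → Prop}
    (hcomp : ∀ i j : ι, i ≠ j → ∀ u ∈ τ i, ∀ v ∈ τ j, (G u v ↔ Ghat i j))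
    {jh kh : ι} (hdom : GraphDominates Ghat Finset.univ kh jh)
    {k j : α} (hk : k ∈ τ kh) (hj : j ∈ τ jh) :
    GraphDominates G (Finset.univ.biUnion τ) k j := by
  have hkj := hdom.ne
  obtain ⟨-, hdom_in, hdom_jk, hdom_kj⟩ := hdom
  have hjk : Ghat jh kh := hdom_jk (Finset.mem_univ _)
  have hnkj : ¬ Ghat kh jh := hdom_kj (Finset.mem_univ _)
  refine ⟨Or.inl (Finset.mem_biUnion.mpr ⟨jh, Finset.mem_univ _, hj⟩), ?_,
    fun _ => (hcomp jh kh hkj.symm j hj k hk).mpr hjk,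
    fun _ hGkj => hnkj ((hcomp kh jh hkj k hk j hj).mp hGkj)⟩
  intro i hi _ _ hij
  obtain ⟨m, -, hm⟩ := Finset.mem_biUnion.mp hi
  by_cases hmj : m = jh
  · subst hmj
    exact (hcomp m kh hkj.symm i hm k hk).mpr hjk
  · have hmj' : Ghat m jh := (hcomp m jh hmj i hm j hj).mp hij
    have hmk : m ≠ kh := by rintro rfl; exact hnkj hmj'
    exact (hcomp m kh hmk i hm k hk).mpr (hdom_in m (Finset.mem_univ _) hmj hmk hmj')

theorem strongly_forbidden_skeleton_general {n N : ℕ}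
    (τ : Fin N → Finset (Fin n)) (hne : ∀ i, (τ i).Nonempty)
    (G : Fin n → Fin n → Prop) (Ghat : Fin N → Fin N → Prop)
    (hcomp : ∀ i j : Fin N, i ≠ j → ∀ u ∈ τ i, ∀ v ∈ τ j, (G u v ↔ Ghat i j))
    (jh kh : Fin N) (hdom : GraphDominates Ghat Finset.univ kh jh) :
    (∀ k ∈ τ kh, ∀ j ∈ τ jh, GraphDominates G (Finset.univ.biUnion τ) k j) ∧
    (∃ j ∈ Finset.univ.biUnion τ, ∃ k ∈ Finset.univ.biUnion τ,
      GraphDominates G (Finset.univ.biUnion τ) k j) := by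
  have lift : ∀ k ∈ τ kh, ∀ j ∈ τ jh, GraphDominates G (Finset.univ.biUnion τ) k j :=
    fun _ hk _ hj => hdom.biUnion_of_skeleton hcomp hk hj
  obtain ⟨k, hk⟩ := hne kh
  obtain ⟨j, hj⟩ := hne jh
  exact ⟨lift, j, Finset.mem_biUnion.mpr ⟨jh, Finset.mem_univ _, hj⟩,
    k, Finset.mem_biUnion.mpr ⟨kh, Finset.mem_univ _, hk⟩, lift k hk j hj⟩

/-- **Strongly forbidden skeleton.** Let `G` be a composite graph on vertex set
`V = τ_1 ∪ … ∪ τ_N` with components `G|_{τ_i}` and skeleton `Ĝ` on `[N]`. If the skeleton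
is strongly forbidden (some `k̂` graphically dominates some `ĵ` with respect to `[N]` in
`Ĝ`), then `G` is strongly forbidden; more precisely, every `k ∈ τ_{k̂}` graphically
dominates every `j ∈ τ_{ĵ}` with respect to `V` in `G`. -/
theorem strongly_forbidden_skeleton {n N : ℕ}
    (τ : Fin N → Finset (Fin n)) (hne : ∀ i, (τ i).Nonempty)
    (hdisj : ∀ i j, i ≠ j → Disjoint (τ i) (τ j))
    (G : Fin n → Fin n → Prop) (Ghat : Fin N → Fin N → Prop)
    (hGirr : ∀ u, ¬ G u u) (hGhatirr : ∀ i, ¬ Ghat i i)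
    (hcomp : ∀ i j : Fin N, i ≠ j → ∀ u ∈ τ i, ∀ v ∈ τ j, (G u v ↔ Ghat i j))
    (jh kh : Fin N) (hdom : GraphDominates Ghat Finset.univ kh jh) :
    (∀ k ∈ τ kh, ∀ j ∈ τ jh, GraphDominates G (Finset.univ.biUnion τ) k j) ∧
    (∃ j ∈ Finset.univ.biUnion τ, ∃ k ∈ Finset.univ.biUnion τ,
      GraphDominates G (Finset.univ.biUnion τ) k j) :=
  strongly_forbidden_skeleton_general τ hne G Ghat hcomp jh kh hdom
end

section
/- Clique unions. Let G be a simple directed graph on [n] with CTLN parameters in the legal range, such that G is the clique union of components G_1,…,G_N on vertex sets τ_1,…,τ_N (i.e. [n] = τ_1 ∪ … ∪ τ_N with the τ_i pairwise disjoint, and for all i ≠ j, every node of τ_i sends an edge in G to every node of τ_j). Then for any σ ⊆ [n], writing σ_i := σ ∩ τ_i: σ ∈ FP(G) if and only if σ_i ∈ FP(G_i) for every i ∈ [N]. Moreover, if σ ∈ FP(G) then sgn det(I − W_σ) = Π_{i=1}^N sgn det(I − W_{σ_i}). -/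
open Matrix Finset

/-!
Across components every weight is `-1 + ε`, so the input to a neuron of `τ_k` is its input from
`τ_k` minus `(1 - ε)` times the mass of `x` outside `τ_k`. Hence `x` is a fixed point of the whole
network iff each restriction `x|τ_k` is a fixed point of `G_k` for the threshold
`θ - (1 - ε) ∑_{j ∉ τ_k} x_j`. For any fixed point `θ - (1 - ε) ∑ x > 0` (look at the row of a
neuron with `x_ℓ > 0`), so these thresholds are positive, and rescaling `(x, θ) ↦ (c x, c θ)`
preserves supports: this gives both directions. For the determinants write
`I - W = B + (1 - ε) J` with `B` block diagonal along the components; the fixed point satisfies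
`B x_σ = u 𝟙` with `u = θ - (1 - ε) ∑ x > 0`, so by the matrix determinant lemma `det (I - W_σ)`
differs from `det B_σ = ∏ det B_{σ_k}` by a positive factor, and likewise each
`det (I - W_{σ_k})` from `det B_{σ_k}`.
-/

theorem Real.sign_eq_coe_sign (r : ℝ) : Real.sign r = ((SignType.sign r : SignType) : ℝ) := by
  rcases lt_trichotomy r 0 with h | rfl | h <;> simp [Real.sign_of_neg, Real.sign_of_pos, *]

theorem Real.sign_prod {ι : Type*} (s : Finset ι) (f : ι → ℝ) :
    Real.sign (∏ i ∈ s, f i) = ∏ i ∈ s, Real.sign (f i) := by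
  simp only [Real.sign_eq_coe_sign]
  exact map_prod ((SignType.castHom : SignType →*₀ ℝ).comp signHom) f s

theorem Real.sign_mul_of_pos {a : ℝ} (ha : 0 < a) (r : ℝ) : Real.sign (a * r) = Real.sign r := by
  simp [Real.sign_eq_coe_sign, sign_mul, sign_pos ha]

theorem Real.sign_eq_of_mul_eq {a b x y : ℝ} (ha : 0 < a) (hb : 0 < b) (h : a * x = b * y) :
    Real.sign x = Real.sign y := by
  rw [← Real.sign_mul_of_pos ha, h, Real.sign_mul_of_pos hb]

theorem Matrix.det_add_const_of_mulVec_eq_const {m K : Type*} [Fintype m] [DecidableEq m]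
    [Field K] {B : Matrix m m K} {y : m → K} {u : K} (hu : u ≠ 0)
    (hBy : B *ᵥ y = fun _ => u) (c : K) :
    u * (B + of fun _ _ => c).det = (u + c * ∑ i, y i) * B.det := by
  have hfactor : B + of (fun _ _ => c) =
      B * (1 + replicateCol Unit (u⁻¹ • y) * replicateRow Unit (fun _ => c)) := by
    rw [Matrix.mul_add, Matrix.mul_one, ← Matrix.mul_assoc, ← replicateCol_mulVec, mulVec_smul, hBy]
    ext i j
    simp [Matrix.mul_apply, replicateCol, replicateRow, hu]
  rw [hfactor, det_mul, det_one_add_replicateCol_mul_replicateRow]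
  simp only [dotProduct, Pi.smul_apply, smul_eq_mul, ← Finset.mul_sum]
  field_simp

theorem Matrix.det_submatrix_eq_prod_fiber {ι α R : Type*} [Fintype ι] [DecidableEq ι]
    [CommRing R] [DecidableEq α] [Fintype α] [LinearOrder α]
    (A : Matrix ι ι R) (κ : ι → α) (hA : ∀ i j, κ i ≠ κ j → A i j = 0) (s : Finset ι) :
    (A.submatrix ((↑) : s → ι) (↑)).det =
      ∏ k, (A.submatrix ((↑) : (s ∩ ({i | κ i = k} : Finset ι) : Finset ι) → ι) (↑)).det := by
  have hblock : (A.submatrix ((↑) : s → ι) (↑)).BlockTriangular (κ ∘ (↑)) :=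
    fun i j hij => hA _ _ hij.ne'
  rw [hblock.det_fintype]
  refine prod_congr rfl fun k _ => ?_
  let e : (s ∩ ({i | κ i = k} : Finset ι) : Finset ι) ≃ {i : s // κ i = k} :=
    { toFun := fun i => ⟨⟨i, (mem_inter.1 i.2).1⟩, (mem_filter.1 (mem_inter.1 i.2).2).2⟩
      invFun := fun i => ⟨i, mem_inter.2 ⟨i.1.2, mem_filter.2 ⟨mem_univ _, i.2⟩⟩⟩
      left_inv := fun _ => rfl
      right_inv := fun _ => rfl }
  exact (det_submatrix_equiv_self e _).symm

theorem Finset.exists_eq_fiber_of_disjoint_of_biUnion_eq_univ {ι α : Type*} [Fintype ι]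
    [DecidableEq ι] [Fintype α] [DecidableEq α] {τ : α → Finset ι}
    (hdisj : ∀ k l, k ≠ l → Disjoint (τ k) (τ l)) (hcover : univ.biUnion τ = univ) :
    ∃ κ : ι → α, τ = fun k => ({i | κ i = k} : Finset ι) := by
  have hmem : ∀ i, ∃ k, i ∈ τ k := fun i => by
    simpa using (hcover ▸ mem_univ i : i ∈ univ.biUnion τ)
  choose κ hκ using hmem
  refine ⟨κ, funext fun k => ext fun i => ⟨fun hi => ?_, fun hi => ?_⟩⟩
  · by_contra hne
    exact disjoint_left.1 (hdisj _ _ fun h => hne (by simpa using h)) (hκ i) hi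
  · rw [mem_filter_univ] at hi
    exact hi ▸ hκ i

section FixedPoint

variable {n : ℕ} {W : Matrix (Fin n) (Fin n) ℝ} {b : Fin n → ℝ} {τ σ : Finset (Fin n)}
  {x : Fin n → ℝ}

theorem isRestFixedPoint_iff_sum_univ :
    IsRestFixedPoint W b τ x ↔
      (∀ i ∈ τ, x i = max 0 (∑ j, W i j * x j + b i)) ∧ ∀ i ∉ τ, x i = 0 := by
  refine and_congr_left fun hout => forall₂_congr fun i _ => ?_
  rw [sum_subset (subset_univ τ) fun j _ hj => by rw [hout j hj, mul_zero]]

theorem IsRestFixedPoint.nonneg_s11 (hx : IsRestFixedPoint W b τ x) (i : Fin n) : 0 ≤ x i := by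
  by_cases hi : i ∈ τ
  · rw [hx.1 i hi]
    exact le_max_left _ _
  · rw [hx.2 i hi]

theorem IsRestFixedPoint.eq_of_pos_s11 (hx : IsRestFixedPoint W b τ x) {i : Fin n} (hi : 0 < x i) :
    x i = ∑ j, W i j * x j + b i := by
  have hiτ : i ∈ τ := by
    by_contra h
    exact hi.ne' (hx.2 i h)
  have hfix := (isRestFixedPoint_iff_sum_univ.1 hx).1 i hiτ
  rw [hfix] at hi ⊢
  exact max_eq_right (lt_max_iff.1 hi |>.resolve_left (lt_irrefl 0)).le

theorem IsRestFixedPoint.smul (hx : IsRestFixedPoint W b τ x) {c : ℝ} (hc : 0 ≤ c) :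
    IsRestFixedPoint W (c • b) τ (c • x) := by
  refine ⟨fun i hi => ?_, fun i hi => by simp [hx.2 i hi]⟩
  have hlin : ∑ j ∈ τ, W i j * (c • x) j + (c • b) i = c * (∑ j ∈ τ, W i j * x j + b i) := by
    rw [mul_add, mul_sum]
    simp only [Pi.smul_apply, smul_eq_mul]
    congr 1
    exact sum_congr rfl fun j _ => by ring
  rw [Pi.smul_apply, smul_eq_mul, hx.1 i hi, hlin, mul_max_of_nonneg _ _ hc, mul_zero]

theorem memFP.smul (h : memFP W b τ σ) {c : ℝ} (hc : 0 < c) : memFP W (c • b) τ σ := by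
  obtain ⟨x, hx, hsupp⟩ := h
  exact ⟨c • x, hx.smul hc.le, fun i => by simp [mul_pos_iff_of_pos_left hc, hsupp]⟩

theorem memFP_const_of_pos {s t : ℝ} (h : memFP W (fun _ => s) τ σ) (hs : 0 < s) (ht : 0 < t) :
    memFP W (fun _ => t) τ σ := by
  convert h.smul (div_pos ht hs) using 1
  funext
  simp [div_mul_cancel₀ _ hs.ne']

theorem IsRestFixedPoint.sub_mul_sum_pos {ε θ : ℝ} (hdiag : ∀ i, W i i = 0)
    (hoff : ∀ i j, i ≠ j → W i j ≤ -1 + ε) (hε : 0 < ε) (hθ : 0 < θ)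
    (hx : IsRestFixedPoint W (fun _ => θ) τ x) : 0 < θ - (1 - ε) * ∑ j, x j := by
  by_cases hzero : ∀ j, x j = 0
  · simp [hzero, hθ]
  push Not at hzero
  obtain ⟨ℓ, hℓ⟩ := hzero
  have hℓpos : 0 < x ℓ := (hx.nonneg_s11 ℓ).lt_of_ne' hℓ
  have hrow : ∑ j, W ℓ j * x j ≤ (-1 + ε) * (∑ j, x j - x ℓ) := by
    rw [← add_sum_erase _ _ (mem_univ ℓ), hdiag, zero_mul, zero_add,
      ← add_sum_erase _ x (mem_univ ℓ), add_sub_cancel_left, mul_sum]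
    exact sum_le_sum fun j hj =>
      mul_le_mul_of_nonneg_right (hoff ℓ j (ne_of_mem_erase hj).symm) (hx.nonneg_s11 j)
  linarith [hx.eq_of_pos_s11 hℓpos, mul_pos hε hℓpos]

end FixedPoint

theorem mul_detIW_eq {n : ℕ} {W B : Matrix (Fin n) (Fin n) ℝ} {s : Finset (Fin n)}
    {x : Fin n → ℝ} {c u : ℝ} (hB : B = 1 - W - of fun _ _ => c) (hu : u ≠ 0)
    (hx : ∀ i ∈ s, ∑ j ∈ s, B i j * x j = u) :
    u * detIW W s = (u + c * ∑ j ∈ s, x j) * (B.submatrix ((↑) : s → Fin n) (↑)).det := by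
  have hmulVec : B.submatrix ((↑) : s → Fin n) (↑) *ᵥ (fun j : s => x j) = fun _ => u := by
    funext i
    rw [← hx i i.2]
    exact sum_coe_sort s fun j => B i j * x j
  have hIW : (1 : Matrix s s ℝ) - W.submatrix (↑) (↑) =
      B.submatrix ((↑) : s → Fin n) (↑) + of fun _ _ => c := by
    ext i j
    simp only [hB, Matrix.sub_apply, Matrix.add_apply, submatrix_apply, of_apply, one_apply,
      Subtype.ext_iff]
    ring
  rw [detIW, hIW, det_add_const_of_mulVec_eq_const hu hmulVec, sum_coe_sort s x]

section CliqueUnion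

variable {n : ℕ} {α : Type*} [DecidableEq α] {W : Matrix (Fin n) (Fin n) ℝ} {ε θ : ℝ}
  (κ : Fin n → α)

theorem sum_mul_eq_sum_fiber_add (hcross : ∀ i j, κ i ≠ κ j → W i j = -1 + ε)
    (x : Fin n → ℝ) (i : Fin n) :
    ∑ j, W i j * x j =
      ∑ j, W i j * (if κ j = κ i then x j else 0) + (-1 + ε) * ∑ j with κ j ≠ κ i, x j := by
  rw [← sum_filter_add_sum_filter_not univ (κ · = κ i), mul_sum]
  congr 1
  · simp only [mul_ite, mul_zero, sum_filter]
  · exact sum_congr rfl fun j hj => by rw [hcross i j (mem_filter.1 hj).2.symm]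

theorem isRestFixedPoint_univ_iff_fiber (hcross : ∀ i j, κ i ≠ κ j → W i j = -1 + ε)
    {x : Fin n → ℝ} :
    IsRestFixedPoint W (fun _ => θ) univ x ↔
      ∀ k, IsRestFixedPoint W (fun _ => θ - (1 - ε) * ∑ j with κ j ≠ k, x j) {i | κ i = k}
        (fun j => if κ j = k then x j else 0) := by
  have hrow : ∀ i, ∑ j, W i j * x j + θ = ∑ j, W i j * (if κ j = κ i then x j else 0) +
      (θ - (1 - ε) * ∑ j with κ j ≠ κ i, x j) := fun i => by
    rw [sum_mul_eq_sum_fiber_add κ hcross]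
    ring
  simp only [isRestFixedPoint_iff_sum_univ, mem_univ, not_true_eq_false, IsEmpty.forall_iff,
    implies_true, and_true, forall_const, mem_filter_univ]
  constructor
  · intro h k
    refine ⟨fun i hi => ?_, fun i hi => if_neg hi⟩
    subst hi
    rw [if_pos rfl, h i, hrow]
  · intro h i
    have hi := (h (κ i)).1 i rfl
    rwa [if_pos rfl, ← hrow] at hi

theorem memFP_fiber_of_memFP_univ (hdiag : ∀ i, W i i = 0)
    (hoff : ∀ i j, i ≠ j → W i j ≤ -1 + ε) (hcross : ∀ i j, κ i ≠ κ j → W i j = -1 + ε)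
    (hε : 0 < ε) (hε1 : ε ≤ 1) (hθ : 0 < θ) {σ : Finset (Fin n)}
    (h : memFP W (fun _ => θ) univ σ) (k : α) :
    memFP W (fun _ => θ) {i | κ i = k} (σ ∩ ({i | κ i = k} : Finset _)) := by
  obtain ⟨x, hx, hsupp⟩ := h
  have hpos := hx.sub_mul_sum_pos hdiag hoff hε hθ
  have hle : ∑ j with κ j ≠ k, x j ≤ ∑ j, x j :=
    sum_le_sum_of_subset_of_nonneg (filter_subset _ _) fun j _ _ => hx.nonneg_s11 j
  refine memFP_const_of_pos ⟨_, (isRestFixedPoint_univ_iff_fiber κ hcross).1 hx k, fun i => ?_⟩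
    ?_ hθ
  · by_cases hi : κ i = k <;> simp [hi, hsupp]
  · nlinarith [mul_le_mul_of_nonneg_left hle (sub_nonneg.2 hε1)]

theorem memFP_univ_of_forall_memFP_fiber (hdiag : ∀ i, W i i = 0)
    (hoff : ∀ i j, i ≠ j → W i j ≤ -1 + ε) (hcross : ∀ i j, κ i ≠ κ j → W i j = -1 + ε)
    (hε : 0 < ε) (hε1 : ε ≤ 1) (hθ : 0 < θ) {σ : Finset (Fin n)}
    (h : ∀ k, memFP W (fun _ => θ) {i | κ i = k} (σ ∩ ({i | κ i = k} : Finset _))) :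
    memFP W (fun _ => θ) univ σ := by
  choose y hy hsupp using h
  set D : α → ℝ := fun k => θ - (1 - ε) * ∑ j, y k j
  have hD : ∀ k, 0 < D k := fun k => (hy k).sub_mul_sum_pos hdiag hoff hε hθ
  set x : Fin n → ℝ := fun j => y (κ j) j / D (κ j)
  have hfiber : ∀ k, (fun j => if κ j = k then x j else 0) = (D k)⁻¹ • y k := fun k => by
    funext j
    by_cases hj : κ j = k
    · simp [x, hj, div_eq_inv_mul]
    · simp [hj, (hy k).2 j (by simpa using hj)]
  have hsum : ∀ k, ∑ j with κ j = k, x j = (D k)⁻¹ * ∑ j, y k j := fun k => by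
    rw [sum_filter, mul_sum]
    exact sum_congr rfl fun j _ => congrFun (hfiber k) j
  -- with weights `(D k)⁻¹`, the threshold `1 + (1 - ε) ∑ x` leaves fiber `k` exactly `θ / D k`
  refine memFP_const_of_pos (s := 1 + (1 - ε) * ∑ j, x j) ⟨x, ?_, fun j => ?_⟩ ?_ hθ
  · refine (isRestFixedPoint_univ_iff_fiber κ hcross).2 fun k => ?_
    rw [hfiber k]
    convert (hy k).smul (inv_nonneg.2 (hD k).le) using 1
    funext
    rw [← sum_filter_add_sum_filter_not univ (κ · = k), hsum, Pi.smul_apply, smul_eq_mul]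
    field_simp [(hD k).ne']
    ring
  · simp [x, div_pos_iff_of_pos_right (hD _), hsupp]
  · have hx : 0 ≤ ∑ j, x j := sum_nonneg fun j _ => div_nonneg ((hy _).nonneg_s11 j) (hD _).le
    nlinarith [mul_nonneg (sub_nonneg.2 hε1) hx]

theorem sign_detIW_eq_prod_fiber [Fintype α] [LinearOrder α] (hdiag : ∀ i, W i i = 0)
    (hoff : ∀ i j, i ≠ j → W i j ≤ -1 + ε) (hcross : ∀ i j, κ i ≠ κ j → W i j = -1 + ε)
    (hε : 0 < ε) (hε1 : ε ≤ 1) (hθ : 0 < θ) {σ : Finset (Fin n)}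
    (h : memFP W (fun _ => θ) univ σ) :
    Real.sign (detIW W σ) = ∏ k, Real.sign (detIW W (σ ∩ ({i | κ i = k} : Finset _))) := by
  obtain ⟨x, hx, hsupp⟩ := h
  have hx0 : ∀ j ∉ σ, x j = 0 := fun j hj =>
    le_antisymm (not_lt.1 fun h => hj ((hsupp j).1 h)) (hx.nonneg_s11 j)
  set c := 1 - ε
  set u := θ - c * ∑ j, x j
  have hu : 0 < u := hx.sub_mul_sum_pos hdiag hoff hε hθ
  set B : Matrix (Fin n) (Fin n) ℝ := 1 - W - of fun _ _ => c with hB_def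
  have hB : ∀ i j, κ i ≠ κ j → B i j = 0 := fun i j hij => by
    rw [hB_def, Matrix.sub_apply, Matrix.sub_apply, one_apply_ne fun h => hij (congrArg κ h),
      hcross i j hij, of_apply]
    ring
  have hBx : ∀ i ∈ σ, ∑ j, B i j * x j = u := fun i hi => by
    have hfix := hx.eq_of_pos_s11 ((hsupp i).2 hi)
    simp only [B, Matrix.sub_apply, of_apply, sub_mul, sum_sub_distrib, one_apply, ite_mul,
      one_mul, zero_mul, sum_ite_eq, mem_univ, if_true, ← mul_sum]
    linarith
  have hBx_fiber : ∀ s ⊆ σ, (∀ i ∈ s, ∀ j ∈ σ, κ i = κ j → j ∈ s) →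
      ∀ i ∈ s, ∑ j ∈ s, B i j * x j = u := fun s hsσ hclosed i hi => by
    rw [← hBx i (hsσ hi)]
    refine sum_subset (subset_univ s) fun j _ hj => ?_
    by_cases hjσ : j ∈ σ
    · rw [hB i j fun hij => hj (hclosed i hi j hjσ hij), zero_mul]
    · rw [hx0 j hjσ, mul_zero]
  have hσ := mul_detIW_eq hB_def hu.ne' (hBx_fiber σ subset_rfl fun _ _ j hj _ => hj)
  rw [sum_subset (subset_univ σ) fun j _ hj => hx0 j hj,
    show u + c * ∑ j, x j = θ by ring] at hσ
  rw [Real.sign_eq_of_mul_eq hu hθ hσ, det_submatrix_eq_prod_fiber B κ hB, Real.sign_prod]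
  refine prod_congr rfl fun k _ => ?_
  have hk := mul_detIW_eq hB_def hu.ne'
    (hBx_fiber (σ ∩ ({i | κ i = k} : Finset _)) inter_subset_left fun i hi j hj hij => by simp_all)
  have hSk : 0 ≤ c * ∑ j ∈ σ ∩ ({i | κ i = k} : Finset _), x j :=
    mul_nonneg (sub_nonneg.2 hε1) (sum_nonneg fun j _ => hx.nonneg_s11 j)
  exact Real.sign_eq_of_mul_eq (by linarith) hu hk.symm

end CliqueUnion

section CTLN

variable {n : ℕ} {G : Fin n → Fin n → Prop} [DecidableRel G] {ε δ : ℝ}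

theorem ctlnW_apply_self (i : Fin n) : ctlnW G ε δ i i = 0 := by
  simp [ctlnW]

theorem ctlnW_apply_of_adj {i j : Fin n} (hij : i ≠ j) (h : G j i) :
    ctlnW G ε δ i j = -1 + ε := by
  simp [ctlnW, hij, h]

theorem ctlnW_apply_le (hεδ : 0 ≤ ε + δ) {i j : Fin n} (hij : i ≠ j) :
    ctlnW G ε δ i j ≤ -1 + ε := by
  by_cases h : G j i
  · rw [ctlnW_apply_of_adj hij h]
  · simp only [ctlnW, of_apply, if_neg hij, if_neg h]
    linarith

end CTLN

theorem clique_union_rule_general {n N : ℕ} (G : Fin n → Fin n → Prop) [DecidableRel G]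
    (ε δ θ : ℝ)
    (hθ : 0 < θ) (hδ : 0 < δ) (hε : 0 < ε) (hεδ : ε < δ / (δ + 1))
    (W : Matrix (Fin n) (Fin n) ℝ) (hWdef : W = ctlnW G ε δ)
    (b : Fin n → ℝ) (hbdef : b = fun _ => θ)
    (τ : Fin N → Finset (Fin n))
    (hdisj : ∀ i j, i ≠ j → Disjoint (τ i) (τ j))
    (hcover : Finset.univ.biUnion τ = Finset.univ)
    (halledges : ∀ i j : Fin N, i ≠ j → ∀ u ∈ τ i, ∀ v ∈ τ j, G u v)
    (σ : Finset (Fin n)) :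
    (memFP W b Finset.univ σ ↔ ∀ i : Fin N, memFP W b (τ i) (σ ∩ τ i)) ∧
    (memFP W b Finset.univ σ →
      Real.sign (detIW W σ) = ∏ i : Fin N, Real.sign (detIW W (σ ∩ τ i))) := by
  subst hWdef hbdef
  obtain ⟨κ, rfl⟩ := exists_eq_fiber_of_disjoint_of_biUnion_eq_univ hdisj hcover
  have hε1 : ε ≤ 1 := (hεδ.trans ((div_lt_one (by linarith)).2 (by linarith))).le
  have hdiag : ∀ i, ctlnW G ε δ i i = 0 := ctlnW_apply_self
  have hoff : ∀ i j, i ≠ j → ctlnW G ε δ i j ≤ -1 + ε := fun _ _ => ctlnW_apply_le (by linarith)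
  have hcross : ∀ i j, κ i ≠ κ j → ctlnW G ε δ i j = -1 + ε := fun i j hij =>
    ctlnW_apply_of_adj (fun h => hij (congrArg κ h))
      (halledges _ _ hij.symm j (by simp) i (by simp))
  exact ⟨⟨fun h => memFP_fiber_of_memFP_univ κ hdiag hoff hcross hε hε1 hθ h,
    memFP_univ_of_forall_memFP_fiber κ hdiag hoff hcross hε hε1 hθ⟩,
    sign_detIW_eq_prod_fiber κ hdiag hoff hcross hε hε1 hθ⟩

/-- **Clique unions.** Let `G` be a simple directed graph on `[n]` with CTLN parameters in
the legal range, which is the clique union of components `G_1, …, G_N` on vertex sets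
`τ_1, …, τ_N` (all edges between distinct components are present). Then for any
`σ ⊆ [n]`, with `σ_i := σ ∩ τ_i`: `σ ∈ FP(G)` iff `σ_i ∈ FP(G_i)` for every `i`.
Moreover, if `σ ∈ FP(G)` then `sgn det(I − W_σ) = ∏_i sgn det(I − W_{σ_i})`. -/
theorem clique_union_rule {n N : ℕ} (G : Fin n → Fin n → Prop) [DecidableRel G]
    (hGirr : ∀ i, ¬ G i i) (ε δ θ : ℝ)
    (hθ : 0 < θ) (hδ : 0 < δ) (hε : 0 < ε) (hεδ : ε < δ / (δ + 1))
    (W : Matrix (Fin n) (Fin n) ℝ) (hWdef : W = ctlnW G ε δ)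
    (b : Fin n → ℝ) (hbdef : b = fun _ => θ)
    (τ : Fin N → Finset (Fin n)) (hne : ∀ i, (τ i).Nonempty)
    (hdisj : ∀ i j, i ≠ j → Disjoint (τ i) (τ j))
    (hcover : Finset.univ.biUnion τ = Finset.univ)
    (halledges : ∀ i j : Fin N, i ≠ j → ∀ u ∈ τ i, ∀ v ∈ τ j, G u v)
    (σ : Finset (Fin n)) :
    (memFP W b Finset.univ σ ↔ ∀ i : Fin N, memFP W b (τ i) (σ ∩ τ i)) ∧
    (memFP W b Finset.univ σ →
      Real.sign (detIW W σ) = ∏ i : Fin N, Real.sign (detIW W (σ ∩ τ i))) :=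
  clique_union_rule_general G ε δ θ hθ hδ hε hεδ W hWdef b hbdef τ hdisj hcover halledges σ
end
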